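/- arXiv:1805.01144 — 3 statements merged into one kernel-verified Lean document; each statement's English description precedes it below -/
import Mathlib

section
/- Let d ∈ ℕ, let τ₁ < τ₂ be real numbers, and let G : {(t,s) : τ₁ ≤ s ≤ t ≤ τ₂} → ℝ^{d×d} be bounded and measurable. Then for every essentially bounded measurable F : (τ₁,τ₂) → ℝ^d there exists a unique (up to equality almost everywhere) essentially bounded measurable U : (τ₁,τ₂) → ℝ^d satisfying the Volterra equation of the second kind U(t) = F(t) + ∫_{τ₁}^t G(t,s) U(s) ds for almost every t ∈ (τ₁,τ₂). -/
/-!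
Let `K` be the Volterra operator. Since the kernel is bounded by some `c` and `K` only integrates
over `(τ₁, t)`, an a.e. bound `‖V s‖ ≤ A (s - τ₁)ⁿ / n!` yields
`‖K V t‖ ≤ c A (t - τ₁)ⁿ⁺¹ / (n + 1)!`, hence `‖Kⁿ V‖ ≤ A (c (τ₂ - τ₁))ⁿ / n!`.
The Neumann series `∑ Kⁿ F` therefore converges, and since dominated convergence lets `K` pass
through the sum it solves `U = F + K U`. The difference `W` of two solutions satisfies
`W = Kⁿ W` for every `n`, so it vanishes.
-/

open MeasureTheory Set Filter Nat
open scoped Matrix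

theorem Matrix.norm_mulVec_le_of_abs_le {ι : Type*} [Fintype ι] (A : Matrix ι ι ℝ) (v : ι → ℝ)
    {c : ℝ} (hc : 0 ≤ c) (hA : ∀ i j, |A i j| ≤ c) :
    ‖A *ᵥ v‖ ≤ Fintype.card ι * c * ‖v‖ := by
  refine (pi_norm_le_iff_of_nonneg (by positivity)).2 fun i => ?_
  calc ‖(A *ᵥ v) i‖ = |∑ j, A i j * v j| := rfl
    _ ≤ ∑ j, |A i j| * ‖v‖ := by
        refine (Finset.abs_sum_le_sum_abs _ _).trans (Finset.sum_le_sum fun j _ => ?_)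
        rw [abs_mul]
        exact mul_le_mul_of_nonneg_left (norm_le_pi_norm v j) (abs_nonneg _)
    _ ≤ ∑ _j : ι, c * ‖v‖ := Finset.sum_le_sum fun j _ => by gcongr; exact hA i j
    _ = Fintype.card ι * c * ‖v‖ := by simp [mul_assoc]

theorem integral_sub_pow_div_factorial (a t : ℝ) (n : ℕ) :
    ∫ s in a..t, (s - a) ^ n / n ! = (t - a) ^ (n + 1) / (n + 1)! := by
  rw [intervalIntegral.integral_div, intervalIntegral.integral_comp_sub_right (· ^ n), integral_pow,
    Nat.factorial_succ]
  push_cast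
  field_simp
  ring

theorem ae_imp_mem_Ioc_of_ae_restrict_Ioo {a b : ℝ} {P : ℝ → Prop}
    (h : ∀ᵐ s ∂volume.restrict (Ioo a b), P s) : ∀ᵐ s, s ∈ Ioc a b → P s := by
  rwa [Measure.restrict_congr_set Ioo_ae_eq_Ioc, ae_restrict_iff' measurableSet_Ioc] at h

section Volterra

variable {ι : Type*} [Fintype ι]

noncomputable def volterraIntegrand (τ₁ : ℝ) (G : ℝ → ℝ → Matrix ι ι ℝ) (V : ℝ → ι → ℝ)
    (t s : ℝ) : ι → ℝ :=
  (Ioc τ₁ t).indicator (fun s => G t s *ᵥ V s) s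

noncomputable def volterraOp (τ₁ : ℝ) (G : ℝ → ℝ → Matrix ι ι ℝ) (V : ℝ → ι → ℝ) (t : ℝ) :
    ι → ℝ :=
  ∫ s, volterraIntegrand τ₁ G V t s

variable {τ₁ τ₂ : ℝ} {G : ℝ → ℝ → Matrix ι ι ℝ}

theorem volterraOp_eq_intervalIntegral (V : ℝ → ι → ℝ) {t : ℝ} (ht : τ₁ ≤ t) :
    volterraOp τ₁ G V t = ∫ s in τ₁..t, G t s *ᵥ V s := by
  rw [intervalIntegral.integral_of_le ht, ← integral_indicator measurableSet_Ioc, volterraOp]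
  rfl

theorem measurable_volterraIntegrand (hG : ∀ i j, Measurable fun p : ℝ × ℝ => G p.1 p.2 i j)
    {V : ℝ → ι → ℝ} (hV : Measurable V) :
    Measurable fun p : ℝ × ℝ => volterraIntegrand τ₁ G V p.1 p.2 := by
  have hdom : MeasurableSet {p : ℝ × ℝ | p.2 ∈ Ioc τ₁ p.1} :=
    (measurableSet_lt measurable_const measurable_snd).inter
      (measurableSet_le measurable_snd measurable_fst)
  refine Measurable.indicator (measurable_pi_iff.2 fun i => ?_) hdom
  exact Finset.measurable_sum _ fun j _ =>
    (hG i j).mul ((measurable_pi_apply j).comp (hV.comp measurable_snd))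

theorem measurable_volterraOp (hG : ∀ i j, Measurable fun p : ℝ × ℝ => G p.1 p.2 i j)
    {V : ℝ → ι → ℝ} (hV : Measurable V) : Measurable (volterraOp τ₁ G V) :=
  (measurable_volterraIntegrand hG hV).stronglyMeasurable.integral_prod_right.measurable

theorem norm_volterraIntegrand_le {CG : ℝ} (hCG : 0 ≤ CG)
    (hG : ∀ t s, τ₁ ≤ s → s ≤ t → t ≤ τ₂ → ∀ i j, |G t s i j| ≤ CG)
    {V : ℝ → ι → ℝ} {b : ℝ → ℝ} (hV : ∀ᵐ s ∂volume.restrict (Ioo τ₁ τ₂), ‖V s‖ ≤ b s)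
    {t : ℝ} (ht : t ≤ τ₂) :
    ∀ᵐ s, ‖volterraIntegrand τ₁ G V t s‖
      ≤ (Ioc τ₁ t).indicator (fun s => Fintype.card ι * CG * b s) s := by
  filter_upwards [ae_imp_mem_Ioc_of_ae_restrict_Ioo hV] with s hs
  by_cases hst : s ∈ Ioc τ₁ t
  · rw [volterraIntegrand, indicator_of_mem hst, indicator_of_mem hst]
    calc ‖G t s *ᵥ V s‖ ≤ Fintype.card ι * CG * ‖V s‖ :=
          (G t s).norm_mulVec_le_of_abs_le _ hCG (hG t s hst.1.le hst.2 ht)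
      _ ≤ Fintype.card ι * CG * b s := by gcongr; exact hs ⟨hst.1, hst.2.trans ht⟩
  · rw [volterraIntegrand, indicator_of_notMem hst, indicator_of_notMem hst, norm_zero]

theorem integrable_volterraIntegrand
    (hGm : ∀ i j, Measurable fun p : ℝ × ℝ => G p.1 p.2 i j) {CG : ℝ} (hCG : 0 ≤ CG)
    (hG : ∀ t s, τ₁ ≤ s → s ≤ t → t ≤ τ₂ → ∀ i j, |G t s i j| ≤ CG)
    {V : ℝ → ι → ℝ} (hVm : Measurable V) {C : ℝ}
    (hV : ∀ᵐ s ∂volume.restrict (Ioo τ₁ τ₂), ‖V s‖ ≤ C) {t : ℝ} (ht : t ≤ τ₂) :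
    Integrable (volterraIntegrand τ₁ G V t) :=
  Integrable.mono' ((integrable_indicator_iff measurableSet_Ioc).2 (integrableOn_const
      measure_Ioc_lt_top.ne))
    ((measurable_volterraIntegrand hGm hVm).comp measurable_prodMk_left).aestronglyMeasurable
    (norm_volterraIntegrand_le hCG hG hV ht)

theorem volterraOp_sub (hGm : ∀ i j, Measurable fun p : ℝ × ℝ => G p.1 p.2 i j) {CG : ℝ}
    (hCG : 0 ≤ CG) (hG : ∀ t s, τ₁ ≤ s → s ≤ t → t ≤ τ₂ → ∀ i j, |G t s i j| ≤ CG)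
    {V W : ℝ → ι → ℝ} (hVm : Measurable V) (hWm : Measurable W) {CV CW : ℝ}
    (hV : ∀ᵐ s ∂volume.restrict (Ioo τ₁ τ₂), ‖V s‖ ≤ CV)
    (hW : ∀ᵐ s ∂volume.restrict (Ioo τ₁ τ₂), ‖W s‖ ≤ CW) {t : ℝ} (ht : t ≤ τ₂) :
    volterraOp τ₁ G (V - W) t = volterraOp τ₁ G V t - volterraOp τ₁ G W t := by
  rw [volterraOp, volterraOp, volterraOp, ← integral_sub
    (integrable_volterraIntegrand hGm hCG hG hVm hV ht)
    (integrable_volterraIntegrand hGm hCG hG hWm hW ht)]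
  congr 1 with s : 1
  by_cases hs : s ∈ Ioc τ₁ t <;> simp [volterraIntegrand, hs, Matrix.mulVec_sub]

theorem norm_volterraOp_le {CG : ℝ} (hCG : 0 ≤ CG)
    (hG : ∀ t s, τ₁ ≤ s → s ≤ t → t ≤ τ₂ → ∀ i j, |G t s i j| ≤ CG)
    {V : ℝ → ι → ℝ} {A : ℝ} {n : ℕ}
    (hV : ∀ᵐ s ∂volume.restrict (Ioo τ₁ τ₂), ‖V s‖ ≤ A * ((s - τ₁) ^ n / n !))
    {t : ℝ} (ht : t ∈ Icc τ₁ τ₂) :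
    ‖volterraOp τ₁ G V t‖ ≤ Fintype.card ι * CG * A * ((t - τ₁) ^ (n + 1) / (n + 1)!) := by
  have hbound := norm_volterraIntegrand_le hCG hG hV ht.2
  refine (norm_integral_le_of_norm_le ?_ hbound).trans_eq ?_
  · exact (integrable_indicator_iff measurableSet_Ioc).2 (by fun_prop : Continuous _).integrableOn_Ioc
  · rw [integral_indicator measurableSet_Ioc, ← intervalIntegral.integral_of_le ht.1,
      intervalIntegral.integral_const_mul, intervalIntegral.integral_const_mul,
      integral_sub_pow_div_factorial]
    ring

theorem norm_le_pow_div_factorial_of_succ_eq_volterraOp {CG : ℝ} (hCG : 0 ≤ CG)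
    (hG : ∀ t s, τ₁ ≤ s → s ≤ t → t ≤ τ₂ → ∀ i j, |G t s i j| ≤ CG)
    {V : ℕ → ℝ → ι → ℝ} {A : ℝ} (h0 : ∀ᵐ t ∂volume.restrict (Ioo τ₁ τ₂), ‖V 0 t‖ ≤ A)
    (hsucc : ∀ n, ∀ᵐ t ∂volume.restrict (Ioo τ₁ τ₂), V (n + 1) t = volterraOp τ₁ G (V n) t)
    (n : ℕ) :
    ∀ᵐ t ∂volume.restrict (Ioo τ₁ τ₂),
      ‖V n t‖ ≤ A * ((Fintype.card ι * CG * (t - τ₁)) ^ n / n !) := by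
  induction n with
  | zero => simpa using h0
  | succ n ih =>
    have ih' : ∀ᵐ s ∂volume.restrict (Ioo τ₁ τ₂),
        ‖V n s‖ ≤ A * (Fintype.card ι * CG) ^ n * ((s - τ₁) ^ n / n !) :=
      ih.mono fun s hs => hs.trans_eq (by rw [mul_pow]; ring)
    filter_upwards [hsucc n, ae_restrict_mem measurableSet_Ioo] with t hVt ht
    rw [hVt]
    exact (norm_volterraOp_le hCG hG ih' (Ioo_subset_Icc_self ht)).trans_eq
      (by rw [mul_pow, mul_pow, pow_succ, pow_succ]; ring)

theorem ae_eq_zero_of_eq_volterraOp {CG : ℝ} (hCG : 0 ≤ CG)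
    (hG : ∀ t s, τ₁ ≤ s → s ≤ t → t ≤ τ₂ → ∀ i j, |G t s i j| ≤ CG)
    {W : ℝ → ι → ℝ} {B : ℝ} (hB : ∀ᵐ t ∂volume.restrict (Ioo τ₁ τ₂), ‖W t‖ ≤ B)
    (hW : ∀ᵐ t ∂volume.restrict (Ioo τ₁ τ₂), W t = volterraOp τ₁ G W t) :
    W =ᵐ[volume.restrict (Ioo τ₁ τ₂)] 0 := by
  have hbound := fun n => norm_le_pow_div_factorial_of_succ_eq_volterraOp hCG hG
    (V := fun _ => W) hB (fun _ => hW) n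
  filter_upwards [ae_all_iff.2 hbound] with t ht
  refine norm_le_zero_iff.1 (ge_of_tendsto' (x := atTop) ?_ ht)
  simpa using (FloorSemiring.tendsto_pow_div_factorial_atTop _).const_mul B

theorem hasSum_volterraOp (hGm : ∀ i j, Measurable fun p : ℝ × ℝ => G p.1 p.2 i j) {CG : ℝ}
    (hCG : 0 ≤ CG) (hG : ∀ t s, τ₁ ≤ s → s ≤ t → t ≤ τ₂ → ∀ i j, |G t s i j| ≤ CG)
    {V : ℕ → ℝ → ι → ℝ} (hVm : ∀ n, Measurable (V n)) {b : ℕ → ℝ}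
    (hV : ∀ n, ∀ᵐ s ∂volume.restrict (Ioo τ₁ τ₂), ‖V n s‖ ≤ b n) (hb : Summable b)
    {t : ℝ} (ht : t ≤ τ₂) :
    HasSum (fun n => volterraOp τ₁ G (V n) t)
      (volterraOp τ₁ G (fun s => ∑' n, V n s) t) := by
  have hsum : ∀ᵐ s, s ∈ Ioc τ₁ τ₂ → HasSum (fun n => V n s) (∑' n, V n s) :=
    (ae_imp_mem_Ioc_of_ae_restrict_Ioo (ae_all_iff.2 hV)).mono fun s hs hmem =>
      (hb.of_norm_bounded (hs hmem)).hasSum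
  have hbound_sum : (fun s => ∑' n, (Ioc τ₁ t).indicator (fun _ => Fintype.card ι * CG * b n) s)
      = (Ioc τ₁ t).indicator fun _ => ∑' n, Fintype.card ι * CG * b n := by
    ext s
    by_cases hs : s ∈ Ioc τ₁ t <;> simp [hs]
  refine hasSum_integral_of_dominated_convergence
    (fun n => (Ioc τ₁ t).indicator fun _ => Fintype.card ι * CG * b n)
    (fun n => ((measurable_volterraIntegrand hGm (hVm n)).comp
      measurable_prodMk_left).aestronglyMeasurable)
    (fun n => norm_volterraIntegrand_le hCG hG (hV n) ht) ?_ ?_ ?_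
  · refine Eventually.of_forall fun s => ?_
    by_cases hs : s ∈ Ioc τ₁ t <;> simp [hs, hb.mul_left]
  · rw [hbound_sum]
    exact (integrable_indicator_iff measurableSet_Ioc).2
      (integrableOn_const measure_Ioc_lt_top.ne)
  · filter_upwards [hsum] with s hs
    by_cases hst : s ∈ Ioc τ₁ t
    · simp only [volterraIntegrand, indicator_of_mem hst]
      exact (hs ⟨hst.1, hst.2.trans ht⟩).map (Matrix.mulVecLin (G t s))
        (continuous_const.matrix_mulVec continuous_id)
    · simp only [volterraIntegrand, indicator_of_notMem hst]
      exact hasSum_zero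

theorem exists_eq_add_volterraOp (hGm : ∀ i j, Measurable fun p : ℝ × ℝ => G p.1 p.2 i j)
    {CG : ℝ} (hCG : 0 ≤ CG) (hG : ∀ t s, τ₁ ≤ s → s ≤ t → t ≤ τ₂ → ∀ i j, |G t s i j| ≤ CG)
    {F : ℝ → ι → ℝ} (hFm : Measurable F) {CF : ℝ} (hCF : 0 ≤ CF)
    (hF : ∀ᵐ t ∂volume.restrict (Ioo τ₁ τ₂), ‖F t‖ ≤ CF) :
    ∃ U : ℝ → ι → ℝ, Measurable U ∧ (∃ C, ∀ᵐ t ∂volume.restrict (Ioo τ₁ τ₂), ‖U t‖ ≤ C) ∧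
      ∀ t ≤ τ₂, U t = F t + volterraOp τ₁ G U t := by
  set K := volterraOp τ₁ G
  set b : ℕ → ℝ := fun n => CF * ((Fintype.card ι * CG * (τ₂ - τ₁)) ^ n / n !)
  have hb : Summable b := (Real.summable_pow_div_factorial _).mul_left CF
  have hKm : ∀ n, Measurable (K^[n] F) := by
    intro n
    induction n with
    | zero => exact hFm
    | succ n ih => rw [Function.iterate_succ']; exact measurable_volterraOp hGm ih
  have hKb : ∀ n, ∀ᵐ t ∂volume.restrict (Ioo τ₁ τ₂), ‖K^[n] F t‖ ≤ b n := by
    intro n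
    filter_upwards [norm_le_pow_div_factorial_of_succ_eq_volterraOp hCG hG (V := (K^[·] F)) hF
      (fun n => ae_of_all _ fun t => by rw [Function.iterate_succ_apply']) n,
      ae_restrict_mem measurableSet_Ioo] with t ht hmem
    have ht₁ : 0 ≤ t - τ₁ := sub_nonneg.2 hmem.1.le
    exact ht.trans (by dsimp only [b]; gcongr; exact hmem.2.le)
  refine ⟨fun t => ∑' n, K^[n] F t,
    (StronglyMeasurable.tsum fun n => (hKm n).stronglyMeasurable).measurable,
    ⟨∑' n, b n, (ae_all_iff.2 hKb).mono fun t ht => tsum_of_norm_bounded hb.hasSum ht⟩,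
    fun t ht => ?_⟩
  have hK : HasSum (fun n => K^[n + 1] F t) (K (fun s => ∑' n, K^[n] F s) t) := by
    simpa only [Function.iterate_succ_apply'] using hasSum_volterraOp hGm hCG hG hKm hKb hb ht
  exact hK.zero_add.tsum_eq

theorem ae_eq_of_eq_add_volterraOp (hGm : ∀ i j, Measurable fun p : ℝ × ℝ => G p.1 p.2 i j)
    {CG : ℝ} (hCG : 0 ≤ CG) (hG : ∀ t s, τ₁ ≤ s → s ≤ t → t ≤ τ₂ → ∀ i j, |G t s i j| ≤ CG)
    {F U U' : ℝ → ι → ℝ} (hUm : Measurable U) (hU'm : Measurable U') {C C' : ℝ}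
    (hUb : ∀ᵐ t ∂volume.restrict (Ioo τ₁ τ₂), ‖U t‖ ≤ C)
    (hU'b : ∀ᵐ t ∂volume.restrict (Ioo τ₁ τ₂), ‖U' t‖ ≤ C')
    (hU : ∀ᵐ t ∂volume.restrict (Ioo τ₁ τ₂), U t = F t + volterraOp τ₁ G U t)
    (hU' : ∀ᵐ t ∂volume.restrict (Ioo τ₁ τ₂), U' t = F t + volterraOp τ₁ G U' t) :
    U' =ᵐ[volume.restrict (Ioo τ₁ τ₂)] U := by
  have hdiff_b : ∀ᵐ t ∂volume.restrict (Ioo τ₁ τ₂), ‖(U' - U) t‖ ≤ C' + C := by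
    filter_upwards [hUb, hU'b] with t ht ht'
    exact (norm_sub_le _ _).trans (add_le_add ht' ht)
  have hdiff : ∀ᵐ t ∂volume.restrict (Ioo τ₁ τ₂),
      (U' - U) t = volterraOp τ₁ G (U' - U) t := by
    filter_upwards [hU, hU', ae_restrict_mem measurableSet_Ioo] with t ht ht' hmem
    rw [volterraOp_sub hGm hCG hG hU'm hUm hU'b hUb hmem.2.le, Pi.sub_apply, ht, ht']
    abel
  filter_upwards [ae_eq_zero_of_eq_volterraOp hCG hG hdiff_b hdiff] with t ht
  exact sub_eq_zero.1 ht

end Volterra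

open MeasureTheory Set intervalIntegral

theorem volterra_second_kind_exists_unique_general
    (d : ℕ) (τ₁ τ₂ : ℝ)
    (G : ℝ → ℝ → Matrix (Fin d) (Fin d) ℝ)
    (hGmeas : ∀ i j, Measurable fun p : ℝ × ℝ => G p.1 p.2 i j)
    (CG : ℝ)
    (hGbdd : ∀ t s, τ₁ ≤ s → s ≤ t → t ≤ τ₂ → ∀ i j, |G t s i j| ≤ CG)
    (F : ℝ → Fin d → ℝ) (hFmeas : Measurable F)
    (CF : ℝ)
    (hFbdd : ∀ᵐ t ∂(volume.restrict (Set.Ioo τ₁ τ₂)), ‖F t‖ ≤ CF) :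
    ∃ U : ℝ → Fin d → ℝ,
      (Measurable U ∧
        (∃ C : ℝ, ∀ᵐ t ∂(volume.restrict (Set.Ioo τ₁ τ₂)), ‖U t‖ ≤ C) ∧
        (∀ᵐ t ∂(volume.restrict (Set.Ioo τ₁ τ₂)),
          U t = F t + ∫ s in τ₁..t, (G t s).mulVec (U s))) ∧
      (∀ U' : ℝ → Fin d → ℝ,
        Measurable U' →
        (∃ C : ℝ, ∀ᵐ t ∂(volume.restrict (Set.Ioo τ₁ τ₂)), ‖U' t‖ ≤ C) →
        (∀ᵐ t ∂(volume.restrict (Set.Ioo τ₁ τ₂)),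
          U' t = F t + ∫ s in τ₁..t, (G t s).mulVec (U' s)) →
        U' =ᵐ[volume.restrict (Set.Ioo τ₁ τ₂)] U) := by
  have hCG : 0 ≤ max CG 0 := le_max_right _ _
  have hG t s h₁ h₂ h₃ i j : |G t s i j| ≤ max CG 0 :=
    (hGbdd t s h₁ h₂ h₃ i j).trans (le_max_left _ _)
  have hsol (V : ℝ → Fin d → ℝ) :
      (∀ᵐ t ∂volume.restrict (Ioo τ₁ τ₂), V t = F t + ∫ s in τ₁..t, (G t s).mulVec (V s)) ↔
        ∀ᵐ t ∂volume.restrict (Ioo τ₁ τ₂), V t = F t + volterraOp τ₁ G V t := by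
    refine eventually_congr ((ae_restrict_mem measurableSet_Ioo).mono fun t ht => ?_)
    rw [volterraOp_eq_intervalIntegral V ht.1.le]
  obtain ⟨U, hUm, ⟨C, hUb⟩, hU⟩ := exists_eq_add_volterraOp hGmeas hCG hG hFmeas
    (le_max_right CF 0) (hFbdd.mono fun t ht => ht.trans (le_max_left _ _))
  have hUae : ∀ᵐ t ∂volume.restrict (Ioo τ₁ τ₂), U t = F t + volterraOp τ₁ G U t :=
    (ae_restrict_mem measurableSet_Ioo).mono fun t ht => hU t ht.2.le
  refine ⟨U, ⟨hUm, ⟨C, hUb⟩, (hsol U).2 hUae⟩, fun U' hU'm ⟨C', hU'b⟩ hU'eq => ?_⟩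
  exact ae_eq_of_eq_add_volterraOp hGmeas hCG hG hUm hU'm hUb hU'b hUae ((hsol U').1 hU'eq)

/-- Existence and uniqueness (up to a.e. equality) of essentially bounded measurable
solutions of the Volterra equation of the second kind
`U(t) = F(t) + ∫_{τ₁}^t G(t,s) U(s) ds` on `(τ₁, τ₂)`. -/
theorem volterra_second_kind_exists_unique
    (d : ℕ) (τ₁ τ₂ : ℝ) (hτ : τ₁ < τ₂)
    (G : ℝ → ℝ → Matrix (Fin d) (Fin d) ℝ)
    (hGmeas : ∀ i j, Measurable fun p : ℝ × ℝ => G p.1 p.2 i j)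
    (CG : ℝ)
    (hGbdd : ∀ t s, τ₁ ≤ s → s ≤ t → t ≤ τ₂ → ∀ i j, |G t s i j| ≤ CG)
    (F : ℝ → Fin d → ℝ) (hFmeas : Measurable F)
    (CF : ℝ)
    (hFbdd : ∀ᵐ t ∂(volume.restrict (Set.Ioo τ₁ τ₂)), ‖F t‖ ≤ CF) :
    ∃ U : ℝ → Fin d → ℝ,
      (Measurable U ∧
        (∃ C : ℝ, ∀ᵐ t ∂(volume.restrict (Set.Ioo τ₁ τ₂)), ‖U t‖ ≤ C) ∧
        (∀ᵐ t ∂(volume.restrict (Set.Ioo τ₁ τ₂)),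
          U t = F t + ∫ s in τ₁..t, (G t s).mulVec (U s))) ∧
      (∀ U' : ℝ → Fin d → ℝ,
        Measurable U' →
        (∃ C : ℝ, ∀ᵐ t ∂(volume.restrict (Set.Ioo τ₁ τ₂)), ‖U' t‖ ≤ C) →
        (∀ᵐ t ∂(volume.restrict (Set.Ioo τ₁ τ₂)),
          U' t = F t + ∫ s in τ₁..t, (G t s).mulVec (U' s)) →
        U' =ᵐ[volume.restrict (Set.Ioo τ₁ τ₂)] U) :=
  volterra_second_kind_exists_unique_general d τ₁ τ₂ G hGmeas CG hGbdd F hFmeas CF hFbdd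
end

section
/- Let T > 0, let f, g : [0,T] → ℝ be continuously differentiable, and let V : [0,T] → ℝ be continuous and satisfy the mixed Volterra–Fredholm equation V(t) = ∫_0^t f(t−s) V(s) ds + ∫_t^T g(s−t) V(s) ds for all t ∈ [0,T]. If V(0) = 0, then V is continuously differentiable on [0,T] and its derivative satisfies, for every t ∈ [0,T], V′(t) = ∫_0^t f(t−s) V′(s) ds + ∫_t^T g(s−t) V′(s) ds − g(T−t) V(T). -/
/-!
Writing a `C¹` kernel as `k (t - s) = k 0 + ∫ r in s..t, k' (r - s)` and swapping the order of
integration over the triangle `0 ≤ s ≤ r ≤ t` gives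
`∫ s in 0..t, k (t - s) * v s = k 0 * ∫ s in 0..t, v s + ∫ r in 0..t, ∫ s in 0..r, k' (r - s) * v s`,
so this Volterra convolution has derivative `k 0 * v t + ∫ s in 0..t, k' (t - s) * v s`. The
Fredholm part becomes a Volterra convolution under the reflection `s ↦ T - s`. Hence `V` is `C¹`
with `V' = (f 0 - g 0) V + ∫ s in 0..t, f' (t - s) * V s - ∫ s in t..T, g' (s - t) * V s`, and
integrating by parts the right-hand side of the equation with `V'` in place of `V` returns this
expression plus the boundary terms `g (T - t) * V T - f t * V 0`.
-/

open Set intervalIntegral MeasureTheory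

theorem ContinuousOn.exists_continuous_eqOn_Icc {β : Type*} [TopologicalSpace β] {a b : ℝ}
    (hab : a ≤ b) {v : ℝ → β} (hv : ContinuousOn v (Icc a b)) :
    ∃ w : ℝ → β, Continuous w ∧ EqOn w v (Icc a b) :=
  ⟨fun x => v (projIcc a b hab x),
    hv.comp_continuous (continuous_subtype_val.comp continuous_projIcc)
      fun x => (projIcc a b hab x).2,
    fun x hx => by simp [projIcc_of_mem hab hx]⟩

theorem exists_hasDerivAt_eqOn_Icc {a b : ℝ} (hab : a ≤ b) {f f' : ℝ → ℝ}
    (hf : ∀ x ∈ Icc a b, HasDerivWithinAt f (f' x) (Icc a b) x)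
    (hf' : ContinuousOn f' (Icc a b)) :
    ∃ F F' : ℝ → ℝ, Continuous F' ∧ (∀ x, HasDerivAt F (F' x) x) ∧ EqOn F f (Icc a b) := by
  obtain ⟨φ, hφ, hφf'⟩ := hf'.exists_continuous_eqOn_Icc hab
  refine ⟨fun x => f a + ∫ y in a..x, φ y, φ, hφ,
    fun x => (hφ.integral_hasStrictDerivAt a x).hasDerivAt.const_add _, fun x hx => ?_⟩
  have hderiv : ∀ y ∈ Ioo a x, HasDerivWithinAt f (φ y) (Ioi y) y := fun y hy =>
    (((hf y ⟨hy.1.le, hy.2.le.trans hx.2⟩).hasDerivAt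
      (Icc_mem_nhds hy.1 (hy.2.trans_le hx.2))).congr_deriv
        (hφf' ⟨hy.1.le, hy.2.le.trans hx.2⟩).symm).hasDerivWithinAt
  have hcont : ContinuousOn f (Icc a x) := fun y hy =>
    ((hf y ⟨hy.1, hy.2.trans hx.2⟩).continuousWithinAt).mono (Icc_subset_Icc_right hx.2)
  simp only [integral_eq_sub_of_hasDeriv_right_of_le hx.1 hcont hderiv (hφ.intervalIntegrable a x),
    add_sub_cancel]

theorem intervalIntegral_integral_swap_triangle {G : ℝ → ℝ → ℝ}
    (hG : Continuous (Function.uncurry G)) {a t : ℝ} (hat : a ≤ t) :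
    ∫ s in a..t, ∫ r in s..t, G r s = ∫ r in a..t, ∫ s in a..r, G r s := by
  set K : ℝ → ℝ → ℝ := fun s r => (Ioi s).indicator (fun r => G r s) r
  have hK : IntegrableOn (Function.uncurry K) (uIoc a t ×ˢ uIoc a t) := by
    have hcont : IntegrableOn (fun p : ℝ × ℝ => G p.2 p.1) (uIcc a t ×ˢ uIcc a t) :=
      (hG.comp continuous_swap).continuousOn.integrableOn_compact
        (isCompact_uIcc.prod isCompact_uIcc)
    exact (hcont.mono_set (prod_mono uIoc_subset_uIcc uIoc_subset_uIcc)).indicator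
      (isOpen_lt continuous_fst continuous_snd).measurableSet
  have h_left : ∀ s ∈ Ioc a t, ∫ r in s..t, G r s = ∫ r in a..t, K s r := by
    intro s hs
    change _ = ∫ r in a..t, (Ioi s).indicator (fun r => G r s) r
    rw [integral_of_le hat, setIntegral_indicator measurableSet_Ioi, Ioc_inter_Ioi,
      max_eq_right hs.1.le, integral_of_le hs.2]
  have h_right : ∀ r ∈ Ioc a t, ∫ s in a..r, G r s = ∫ s in a..t, K s r := by
    intro r hr
    have hset : Ioc a t ∩ Iio r = Ioo a r := by
      ext x
      simp only [mem_inter_iff, mem_Ioc, mem_Iio, mem_Ioo]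
      exact ⟨fun h => ⟨h.1.1, h.2⟩, fun h => ⟨⟨h.1, h.2.le.trans hr.2⟩, h.2⟩⟩
    change _ = ∫ s in a..t, (Iio r).indicator (G r) s
    rw [integral_of_le hat, setIntegral_indicator measurableSet_Iio, hset,
      ← integral_Ioc_eq_integral_Ioo, integral_of_le hr.1.le]
  calc ∫ s in a..t, ∫ r in s..t, G r s = ∫ s in a..t, ∫ r in a..t, K s r :=
        integral_congr_ae (.of_forall fun s hs => h_left s (uIoc_of_le hat ▸ hs))
    _ = ∫ r in a..t, ∫ s in a..t, K s r := intervalIntegral_intervalIntegral_swap hK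
    _ = ∫ r in a..t, ∫ s in a..r, G r s :=
        integral_congr_ae (.of_forall fun r hr => (h_right r (uIoc_of_le hat ▸ hr)).symm)

noncomputable def volterraConv (k v : ℝ → ℝ) (t : ℝ) : ℝ := ∫ s in (0:ℝ)..t, k (t - s) * v s

section VolterraConv

variable {k k' v : ℝ → ℝ}

theorem continuous_volterraConv (hk : Continuous k) (hv : Continuous v) :
    Continuous (volterraConv k v) :=
  continuous_parametric_intervalIntegral_of_continuous (f := fun t s => k (t - s) * v s)
    (by fun_prop) continuous_id

theorem volterraConv_eq_add_integral_volterraConv (hk : ∀ x, HasDerivAt k (k' x) x)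
    (hk' : Continuous k') (hv : Continuous v) {t : ℝ} (ht : 0 ≤ t) :
    volterraConv k v t = k 0 * (∫ s in (0:ℝ)..t, v s) + ∫ r in (0:ℝ)..t, volterraConv k' v r := by
  have hkc : Continuous k := continuous_iff_continuousAt.2 fun x => (hk x).continuousAt
  have hftc : ∀ s, k (t - s) - k 0 = ∫ r in s..t, k' (r - s) := fun s => by
    rw [integral_comp_sub_right, sub_self,
      integral_eq_sub_of_hasDerivAt (fun x _ => hk x) (hk'.intervalIntegrable _ _)]
  calc volterraConv k v t
      = ∫ s in (0:ℝ)..t, (k 0 * v s + (k (t - s) - k 0) * v s) := by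
        unfold volterraConv; congr 1; ext s; ring
    _ = k 0 * (∫ s in (0:ℝ)..t, v s) + ∫ s in (0:ℝ)..t, ∫ r in s..t, k' (r - s) * v s := by
        rw [intervalIntegral.integral_add ((by fun_prop : Continuous _).intervalIntegrable _ _)
          ((by fun_prop : Continuous _).intervalIntegrable _ _),
          intervalIntegral.integral_const_mul]
        simp only [hftc, intervalIntegral.integral_mul_const]
    _ = _ := by
        rw [intervalIntegral_integral_swap_triangle (G := fun r s => k' (r - s) * v s)
          (by fun_prop) ht]
        rfl

theorem hasDerivWithinAt_volterraConv (hk : ∀ x, HasDerivAt k (k' x) x) (hk' : Continuous k')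
    (hv : Continuous v) {t : ℝ} (ht : 0 ≤ t) :
    HasDerivWithinAt (volterraConv k v) (k 0 * v t + volterraConv k' v t) (Ici 0) t := by
  have hrepr := ((hv.integral_hasStrictDerivAt 0 t).hasDerivAt.const_mul (k 0)).add
    ((continuous_volterraConv hk' hv).integral_hasStrictDerivAt 0 t).hasDerivAt
  exact hrepr.hasDerivWithinAt.congr
    (fun x hx => volterraConv_eq_add_integral_volterraConv hk hk' hv hx)
    (volterraConv_eq_add_integral_volterraConv hk hk' hv ht)

end VolterraConv

noncomputable def mixedVolterraFredholm (f g : ℝ → ℝ) (T : ℝ) (v : ℝ → ℝ) (t : ℝ) : ℝ :=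
  volterraConv f v t + ∫ s in t..T, g (s - t) * v s

theorem integral_sub_mul_eq_volterraConv (g v : ℝ → ℝ) (t T : ℝ) :
    ∫ s in t..T, g (s - t) * v s = volterraConv g (fun w => v (T - w)) (T - t) := by
  have h := integral_comp_sub_left (a := 0) (b := T - t) (fun s => g (s - t) * v s) T
  rw [sub_sub_cancel, sub_zero] at h
  rw [← h, volterraConv]
  simp only [sub_right_comm]

section MixedVolterraFredholm

variable {f f' g g' : ℝ → ℝ} {T : ℝ}

theorem mixedVolterraFredholm_congr {f₁ g₁ v v₁ : ℝ → ℝ} (hf : EqOn f f₁ (Icc 0 T))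
    (hg : EqOn g g₁ (Icc 0 T)) (hv : EqOn v v₁ (Icc 0 T)) {t : ℝ} (ht : t ∈ Icc 0 T) :
    mixedVolterraFredholm f g T v t = mixedVolterraFredholm f₁ g₁ T v₁ t := by
  unfold mixedVolterraFredholm volterraConv
  congr 1 <;> refine integral_congr fun s hs => ?_
  · rw [uIcc_of_le ht.1] at hs
    rw [hf ⟨by linarith [hs.2], by linarith [hs.1, ht.2]⟩, hv ⟨hs.1, hs.2.trans ht.2⟩]
  · rw [uIcc_of_le ht.2] at hs
    rw [hg ⟨by linarith [hs.1], by linarith [hs.2, ht.1]⟩, hv ⟨ht.1.trans hs.1, hs.2⟩]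

theorem continuous_mixedVolterraFredholm {v : ℝ → ℝ} (hf : Continuous f) (hg : Continuous g)
    (hv : Continuous v) : Continuous (mixedVolterraFredholm f g T v) := by
  unfold mixedVolterraFredholm
  simp only [integral_sub_mul_eq_volterraConv]
  exact (continuous_volterraConv hf hv).add
    ((continuous_volterraConv hg (by fun_prop)).comp (by fun_prop))

theorem hasDerivWithinAt_mixedVolterraFredholm (hf : ∀ x, HasDerivAt f (f' x) x)
    (hf' : Continuous f') (hg : ∀ x, HasDerivAt g (g' x) x) (hg' : Continuous g') {v : ℝ → ℝ}
    (hv : Continuous v) {t : ℝ} (ht : t ∈ Icc 0 T) :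
    HasDerivWithinAt (mixedVolterraFredholm f g T v)
      ((f 0 - g 0) * v t + mixedVolterraFredholm f' (-g') T v t) (Icc 0 T) t := by
  have hvolterra := (hasDerivWithinAt_volterraConv hf hf' hv ht.1).mono
    (Icc_subset_Ici_self : Icc 0 T ⊆ Ici 0)
  have hfredholm := (hasDerivWithinAt_volterraConv hg hg' (v := fun w => v (T - w)) (by fun_prop)
    (sub_nonneg.2 ht.2)).comp t ((hasDerivAt_id t).const_sub T).hasDerivWithinAt
      (fun x hx => sub_nonneg.2 hx.2 : MapsTo (T - ·) (Icc 0 T) (Ici 0))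
  have hsplit : mixedVolterraFredholm f g T v =
      fun x => volterraConv f v x + volterraConv g (fun w => v (T - w)) (T - x) := by
    ext x
    rw [mixedVolterraFredholm, integral_sub_mul_eq_volterraConv]
  rw [hsplit]
  refine (hvolterra.add hfredholm).congr_deriv ?_
  simp only [mixedVolterraFredholm, integral_sub_mul_eq_volterraConv, volterraConv,
    Pi.neg_apply, neg_mul, intervalIntegral.integral_neg, sub_sub_cancel]
  ring

theorem mixedVolterraFredholm_by_parts
    (hf : ∀ x, HasDerivAt f (f' x) x) (hf' : Continuous f')
    (hg : ∀ x, HasDerivAt g (g' x) x) (hg' : Continuous g') {v v' : ℝ → ℝ}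
    (hv : ∀ x ∈ Icc 0 T, HasDerivWithinAt v (v' x) (Icc 0 T) x)
    (hv' : ContinuousOn v' (Icc 0 T)) {t : ℝ} (ht : t ∈ Icc 0 T) :
    mixedVolterraFredholm f g T v' t
      = (f 0 - g 0) * v t - f t * v 0 + g (T - t) * v T + mixedVolterraFredholm f' (-g') T v t := by
  have hparts : ∀ {a b : ℝ}, a ∈ Icc 0 T → b ∈ Icc 0 T → ∀ {u u' : ℝ → ℝ},
      (∀ x, HasDerivAt u (u' x) x) → Continuous u' →
      ∫ x in a..b, u x * v' x = u b * v b - u a * v a - ∫ x in a..b, u' x * v x :=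
    fun ha hb _ _ hu hu' =>
      have hab := uIcc_subset_Icc ha hb
      integral_mul_deriv_eq_deriv_mul_of_hasDerivWithinAt (fun x _ => (hu x).hasDerivWithinAt)
        (fun x hx => (hv x (hab hx)).mono hab) (hu'.intervalIntegrable _ _)
        ((hv'.mono hab).intervalIntegrable)
  have hvolterra := hparts ⟨le_rfl, ht.1.trans ht.2⟩ ht
    (fun x => (hf (t - x)).comp_const_sub t x) (by fun_prop)
  have hfredholm := hparts ht ⟨ht.1.trans ht.2, le_rfl⟩
    (fun x => (hg (x - t)).comp_sub_const x t) (by fun_prop)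
  simp only [mixedVolterraFredholm, volterraConv, hvolterra, hfredholm, Pi.neg_apply, neg_mul,
    intervalIntegral.integral_neg, sub_self, sub_zero]
  ring

end MixedVolterraFredholm

/-- A continuous solution `V` of the mixed Volterra–Fredholm equation
`V(t) = ∫_0^t f(t-s) V(s) ds + ∫_t^T g(s-t) V(s) ds` with `C¹` kernels `f, g`
and `V(0) = 0` is `C¹` on `[0,T]`, with derivative satisfying
`V'(t) = ∫_0^t f(t-s) V'(s) ds + ∫_t^T g(s-t) V'(s) ds - g(T-t) V(T)`. -/
theorem mixed_volterra_fredholm_deriv_eq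
    (T : ℝ) (hT : 0 < T) (f g f' g' V : ℝ → ℝ)
    (hf : ∀ t ∈ Set.Icc 0 T, HasDerivWithinAt f (f' t) (Set.Icc 0 T) t)
    (hf' : ContinuousOn f' (Set.Icc 0 T))
    (hg : ∀ t ∈ Set.Icc 0 T, HasDerivWithinAt g (g' t) (Set.Icc 0 T) t)
    (hg' : ContinuousOn g' (Set.Icc 0 T))
    (hV : ContinuousOn V (Set.Icc 0 T))
    (heq : ∀ t ∈ Set.Icc 0 T,
      V t = (∫ s in (0:ℝ)..t, f (t - s) * V s) + ∫ s in t..T, g (s - t) * V s)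
    (hV0 : V 0 = 0) :
    ∃ V' : ℝ → ℝ, ContinuousOn V' (Set.Icc 0 T) ∧
      (∀ t ∈ Set.Icc 0 T, HasDerivWithinAt V (V' t) (Set.Icc 0 T) t) ∧
      (∀ t ∈ Set.Icc 0 T,
        V' t = (∫ s in (0:ℝ)..t, f (t - s) * V' s)
          + (∫ s in t..T, g (s - t) * V' s) - g (T - t) * V T) := by
  obtain ⟨F, F', hF', hF, hFf⟩ := exists_hasDerivAt_eqOn_Icc hT.le hf hf'
  obtain ⟨G, G', hG', hG, hGg⟩ := exists_hasDerivAt_eqOn_Icc hT.le hg hg'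
  obtain ⟨U, hU, hUV⟩ := hV.exists_continuous_eqOn_Icc hT.le
  have hVU : EqOn V (mixedVolterraFredholm F G T U) (Icc 0 T) := fun t ht =>
    (heq t ht).trans (mixedVolterraFredholm_congr hFf.symm hGg.symm hUV.symm ht)
  set W := fun t => (F 0 - G 0) * U t + mixedVolterraFredholm F' (-G') T U t
  have hW : Continuous W :=
    (continuous_const.mul hU).add (continuous_mixedVolterraFredholm hF' hG'.neg hU)
  have hVW : ∀ t ∈ Icc 0 T, HasDerivWithinAt V (W t) (Icc 0 T) t := fun t ht =>
    (hasDerivWithinAt_mixedVolterraFredholm hF hF' hG hG' hU ht).congr hVU (hVU ht)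
  refine ⟨W, hW.continuousOn, hVW, fun t ht => ?_⟩
  change W t = mixedVolterraFredholm f g T W t - g (T - t) * V T
  rw [mixedVolterraFredholm_congr hFf.symm hGg.symm (eqOn_refl W _) ht,
    mixedVolterraFredholm_by_parts hF hF' hG hG' hVW hW.continuousOn ht, hV0,
    hGg ⟨sub_nonneg.2 ht.2, sub_le_self T ht.1⟩,
    mixedVolterraFredholm_congr (eqOn_refl _ _) (eqOn_refl _ _) hUV.symm ht]
  simp only [W, hUV ht]
  ring
end

section
/- Let c ≥ 1 be a real number and let (a_n)_{n≥0} and (b_n)_{n≥0} be sequences of nonnegative real numbers such that a_0 ≤ 1, b_k ≤ c^k · k! for every k ≥ 0, and a_{n+1} ≤ Σ_{k=0}^{n} a_{n−k} b_k for every n ≥ 0. Then a_n ≤ c^n · n! for every n ≥ 0. -/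
/-!
The majorant `F n = c ^ n * n !` dominates its own Cauchy self-convolution shifted by one:
each of the `m + 1` terms `F (m - k) * F k` is at most `c ^ m * m !` because `k ! (m - k) ! ∣ m !`,
and `(m + 1) * c ^ m * m ! ≤ c ^ (m + 1) * (m + 1)!` since `c ≥ 1`. Strong induction along the
recurrence then bounds `a` by `F`.
-/

open Finset
open scoped Nat

theorem le_of_le_convolution_of_convolution_le {a b F : ℕ → ℝ} (hb : ∀ n, 0 ≤ b n)
    (hF : ∀ n, 0 ≤ F n) (ha0 : a 0 ≤ F 0) (hbF : ∀ n, b n ≤ F n)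
    (hrec : ∀ n, a (n + 1) ≤ ∑ k ∈ range (n + 1), a (n - k) * b k)
    (hFconv : ∀ n, ∑ k ∈ range (n + 1), F (n - k) * F k ≤ F (n + 1)) :
    ∀ n, a n ≤ F n := by
  intro n
  induction n using Nat.strong_induction_on with
  | _ n ih =>
    cases n with
    | zero => exact ha0
    | succ m =>
      calc a (m + 1) ≤ ∑ k ∈ range (m + 1), a (m - k) * b k := hrec m
        _ ≤ ∑ k ∈ range (m + 1), F (m - k) * F k := by
          refine sum_le_sum fun k _ => ?_
          exact mul_le_mul (ih (m - k) (by omega)) (hbF k) (hb k) (hF _)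
        _ ≤ F (m + 1) := hFconv m

theorem pow_mul_factorial_mul_pow_mul_factorial_le {c : ℝ} (hc : 0 ≤ c) {k m : ℕ} (hkm : k ≤ m) :
    c ^ (m - k) * ((m - k)! : ℝ) * (c ^ k * (k ! : ℝ)) ≤ c ^ m * (m ! : ℝ) := by
  have hdvd : k ! * (m - k)! ≤ m ! :=
    Nat.le_of_dvd m.factorial_pos (Nat.factorial_mul_factorial_dvd_factorial hkm)
  calc c ^ (m - k) * ((m - k)! : ℝ) * (c ^ k * (k ! : ℝ))
        = c ^ m * ((k ! * (m - k)! : ℕ) : ℝ) := by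
        rw [← Nat.sub_add_cancel hkm, pow_add, Nat.add_sub_cancel]
        push_cast
        ring
    _ ≤ c ^ m * (m ! : ℝ) := by gcongr

theorem sum_pow_mul_factorial_convolution_le {c : ℝ} (hc : 1 ≤ c) (m : ℕ) :
    ∑ k ∈ range (m + 1), c ^ (m - k) * ((m - k)! : ℝ) * (c ^ k * (k ! : ℝ)) ≤
      c ^ (m + 1) * ((m + 1)! : ℝ) := by
  calc ∑ k ∈ range (m + 1), c ^ (m - k) * ((m - k)! : ℝ) * (c ^ k * (k ! : ℝ))
      ≤ ∑ _k ∈ range (m + 1), c ^ m * (m ! : ℝ) :=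
        sum_le_sum fun k hk =>
          pow_mul_factorial_mul_pow_mul_factorial_le (by linarith)
            (Nat.lt_succ_iff.mp (mem_range.mp hk))
    _ = c ^ m * ((m + 1) * m !) := by
        rw [sum_const, card_range, nsmul_eq_mul]
        push_cast
        ring
    _ ≤ c ^ (m + 1) * ((m + 1)! : ℝ) := by
        rw [Nat.factorial_succ]
        push_cast
        gcongr
        exact m.le_succ

theorem recurrence_factorial_bound_general
    (c : ℝ) (hc : 1 ≤ c) (a b : ℕ → ℝ)
    (hb : ∀ n, 0 ≤ b n)
    (ha0 : a 0 ≤ 1)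
    (hbk : ∀ k, b k ≤ c ^ k * (Nat.factorial k : ℝ))
    (hrec : ∀ n, a (n + 1) ≤ ∑ k ∈ Finset.range (n + 1), a (n - k) * b k) :
    ∀ n, a n ≤ c ^ n * (Nat.factorial n : ℝ) :=
  le_of_le_convolution_of_convolution_le (F := fun n => c ^ n * (n ! : ℝ)) hb
    (fun n => by positivity) (by simpa using ha0) hbk hrec (sum_pow_mul_factorial_convolution_le hc)

/-- If `a 0 ≤ 1`, `b k ≤ c^k k!` and `a (n+1) ≤ ∑_{k=0}^{n} a (n-k) b k` for nonnegative
sequences `a`, `b` and a real `c ≥ 1`, then `a n ≤ c^n n!` for all `n`. -/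
theorem recurrence_factorial_bound
    (c : ℝ) (hc : 1 ≤ c) (a b : ℕ → ℝ)
    (ha : ∀ n, 0 ≤ a n) (hb : ∀ n, 0 ≤ b n)
    (ha0 : a 0 ≤ 1)
    (hbk : ∀ k, b k ≤ c ^ k * (Nat.factorial k : ℝ))
    (hrec : ∀ n, a (n + 1) ≤ ∑ k ∈ Finset.range (n + 1), a (n - k) * b k) :
    ∀ n, a n ≤ c ^ n * (Nat.factorial n : ℝ) :=
  recurrence_factorial_bound_general c hc a b hb ha0 hbk hrec
end
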